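/- arXiv:1205.6433 — 4 statements merged into one kernel-verified Lean document; each statement's English description precedes it below -/
import Mathlib

section
/- Let F be a finite field with q = Fintype.card F, let α be an element of F that generates the unit group Fˣ (every nonzero element of F is a power of α), and let f : F → ZMod (q − 1) be a discrete logarithm for α, i.e., for every x ∈ F with x ≠ 0 one has α ^ (f x).val = x. Then f has the distinct difference (Costas) property: for all a, b, h ∈ F with h ≠ 0, a ≠ 0, b ≠ 0, a + h ≠ 0, and b + h ≠ 0, if f (a + h) − f a = f (b + h) − f b (in ZMod (q − 1)) then a = b. -/
/-!
With `c = α ^ (f (b + h) - f b).val`, the discrete-logarithm property turns the hypothesis into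
`c * a = a + h` and `c * b = b + h`, because `α ^ (q - 1) = 1` lets exponents be added in
`ZMod (q - 1)`. Hence `(c - 1) * a = h = (c - 1) * b` with `c - 1 ≠ 0`, so `a = b`.
-/

theorem pow_val_add_of_pow_eq_one {M : Type*} [Monoid M] {n : ℕ} [NeZero n] {x : M}
    (hx : x ^ n = 1) (u v : ZMod n) : x ^ (u + v).val = x ^ u.val * x ^ v.val := by
  rw [ZMod.val_add, ← pow_eq_pow_mod _ hx, pow_add]

theorem eq_one_of_zero_pow_eq {M₀ : Type*} [MonoidWithZero M₀] {x : M₀} {k : ℕ}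
    (hx : x ≠ 0) (hk : (0 : M₀) ^ k = x) : x = 1 := by
  rw [zero_pow_eq] at hk
  split_ifs at hk
  exacts [hk.symm, absurd hk.symm hx]

theorem eq_of_mul_eq_add_of_mul_eq_add {R : Type*} [Ring R] [NoZeroDivisors R] {c a b h : R}
    (hh : h ≠ 0) (ha : c * a = a + h) (hb : c * b = b + h) : a = b := by
  have ha' : (c - 1) * a = h := by rw [sub_one_mul, ha, add_sub_cancel_left]
  have hb' : (c - 1) * b = h := by rw [sub_one_mul, hb, add_sub_cancel_left]
  have hc : c - 1 ≠ 0 := by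
    rintro hc
    rw [hc, zero_mul] at ha'
    exact hh ha'.symm
  exact mul_left_cancel₀ hc (ha'.trans hb'.symm)

section DiscreteLog

variable {F : Type*} [Field F] [Fintype F]

instance : NeZero (Fintype.card F - 1) :=
  ⟨Nat.sub_ne_zero_of_lt Fintype.one_lt_card⟩

theorem pow_val_log_sub_mul {α : F} (hα : α ≠ 0) {f : F → ZMod (Fintype.card F - 1)}
    (hf : ∀ x : F, x ≠ 0 → α ^ (f x).val = x) {x y : F} (hx : x ≠ 0) (hy : y ≠ 0) :
    α ^ (f y - f x).val * x = y := by
  calc α ^ (f y - f x).val * x = α ^ (f y - f x).val * α ^ (f x).val := by rw [hf x hx]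
    _ = α ^ (f y - f x + f x).val :=
      (pow_val_add_of_pow_eq_one (FiniteField.pow_card_sub_one_eq_one α hα) _ _).symm
    _ = y := by rw [sub_add_cancel, hf y hy]

end DiscreteLog

theorem welch_costas_property_general
    (F : Type*) [Field F] [Fintype F] (α : F)
    (f : F → ZMod (Fintype.card F - 1))
    (hf : ∀ x : F, x ≠ 0 → α ^ (f x).val = x) :
    ∀ a b h : F, h ≠ 0 → a ≠ 0 → b ≠ 0 → a + h ≠ 0 → b + h ≠ 0 →
      f (a + h) - f a = f (b + h) - f b → a = b := by
  intro a b h hh ha hb hah hbh hab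
  -- `a` and `a + h` are distinct nonzero powers of `α`, which rules out `α = 0`.
  have hα : α ≠ 0 := by
    rintro rfl
    have h₁ := eq_one_of_zero_pow_eq ha (hf a ha)
    have h₂ := eq_one_of_zero_pow_eq hah (hf _ hah)
    exact hh (by linear_combination h₂ - h₁)
  have hca := pow_val_log_sub_mul hα hf ha hah
  rw [hab] at hca
  exact eq_of_mul_eq_add_of_mul_eq_add hh hca (pow_val_log_sub_mul hα hf hb hbh)

/-- The distinct difference (Costas) property for the Welch discrete-logarithm
construction over a finite field `F`. -/
theorem welch_costas_property
    (F : Type*) [Field F] [Fintype F] (α : F)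
    (hα : ∀ x : F, x ≠ 0 → ∃ k : ℕ, α ^ k = x)
    (f : F → ZMod (Fintype.card F - 1))
    (hf : ∀ x : F, x ≠ 0 → α ^ (f x).val = x) :
    ∀ a b h : F, h ≠ 0 → a ≠ 0 → b ≠ 0 → a + h ≠ 0 → b + h ≠ 0 →
      f (a + h) - f a = f (b + h) - f b → a = b :=
  welch_costas_property_general F α f hf
end

section
/- Let p be a prime and set n = p^2 − 1. If f : ZMod p × ZMod p → ZMod n has the periodic Costas property and x₁, x₂ ∈ ZMod p are both nonzero, then the row-and-column multiplication G1, namely the function g : ZMod p × ZMod p → ZMod n defined by g (i, j) = f (x₁ * i, x₂ * j), also has the periodic Costas property. -/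
/-- The periodic Costas (distinct difference) property for a three-dimensional
array `f : ℤ_p × ℤ_p → ℤ_{p^2 - 1}`. -/
def PeriodicCostas2 (p n : ℕ) (f : ZMod p × ZMod p → ZMod n) : Prop :=
  ∀ h : ZMod p × ZMod p, h ≠ 0 → ∀ a b : ZMod p × ZMod p,
    a ≠ 0 → b ≠ 0 → a + h ≠ 0 → b + h ≠ 0 →
    f (a + h) - f a = f (b + h) - f b → a = b

theorem PeriodicCostas2.comp_injective {p n : ℕ} {f : ZMod p × ZMod p → ZMod n}
    (hf : PeriodicCostas2 p n f) (φ : ZMod p × ZMod p →+ ZMod p × ZMod p)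
    (hφ : Function.Injective φ) : PeriodicCostas2 p n (f ∘ φ) := by
  intro h hh a b ha hb hah hbh heq
  have hne : ∀ {v}, v ≠ 0 → φ v ≠ 0 := (map_ne_zero_iff φ hφ).mpr
  refine hφ (hf (φ h) (hne hh) (φ a) (φ b) (hne ha) (hne hb) ?_ ?_ ?_)
  · simpa only [map_add] using hne hah
  · simpa only [map_add] using hne hbh
  · simpa only [Function.comp_apply, map_add] using heq

/-- The row-and-column multiplication `G1` applied to a three-dimensional
periodic Costas array over `ℤ_p × ℤ_p` generates a new three-dimensional
periodic Costas array. -/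
theorem G1_periodicCostas
    (p : ℕ) (hp : p.Prime)
    (f : ZMod p × ZMod p → ZMod (p ^ 2 - 1))
    (hf : PeriodicCostas2 p (p ^ 2 - 1) f)
    (x₁ x₂ : ZMod p) (hx₁ : x₁ ≠ 0) (hx₂ : x₂ ≠ 0) :
    PeriodicCostas2 p (p ^ 2 - 1) (fun ij => f (x₁ * ij.1, x₂ * ij.2)) := by
  have := Fact.mk hp
  exact hf.comp_injective ((AddMonoidHom.mulLeft x₁).prodMap (AddMonoidHom.mulLeft x₂))
    ((mul_right_injective₀ hx₁).prodMap (mul_right_injective₀ hx₂))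
end

section
/- Let p be a prime, m ≥ 1, and set n = p^m − 1. If f : (Fin m → ZMod p) → ZMod n has the periodic Costas property and x : Fin m → ZMod p satisfies x i ≠ 0 for every i, then the multiplication permutation G1, namely the function g defined by g a = f (fun i ↦ x i * a i), also has the periodic Costas property. -/
/-- The periodic Costas (distinct difference) property for a multidimensional
array `f : (ℤ_p)^m → ℤ_{p^m - 1}`. -/
def PeriodicCostas (p m n : ℕ) (f : (Fin m → ZMod p) → ZMod n) : Prop :=
  ∀ h : Fin m → ZMod p, h ≠ 0 → ∀ a b : Fin m → ZMod p,
    a ≠ 0 → b ≠ 0 → a + h ≠ 0 → b + h ≠ 0 →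
    f (a + h) - f a = f (b + h) - f b → a = b

theorem PeriodicCostas.comp_addMonoidHom {p m n : ℕ} {f : (Fin m → ZMod p) → ZMod n}
    (hf : PeriodicCostas p m n f) (e : (Fin m → ZMod p) →+ (Fin m → ZMod p))
    (he : Function.Injective e) : PeriodicCostas p m n (f ∘ e) := by
  intro h hh a b ha hb hah hbh hab
  have hne : ∀ {v}, v ≠ 0 → e v ≠ 0 := fun hv => (map_ne_zero_iff e he).mpr hv
  refine he (hf (e h) (hne hh) (e a) (e b) (hne ha) (hne hb) ?_ ?_ ?_)
  · simpa only [map_add] using hne hah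
  · simpa only [map_add] using hne hbh
  · simpa only [Function.comp_apply, map_add] using hab

theorem Pi.mulLeft_injective {ι K : Type*} [MulZeroClass K] [IsLeftCancelMulZero K]
    {x : ι → K} (hx : ∀ i, x i ≠ 0) : Function.Injective (x * ·) :=
  fun _ _ hab => funext fun i => mul_left_cancel₀ (hx i) (congrFun hab i)

theorem G1_general_periodicCostas_general
    (p m : ℕ) (hp : p.Prime)
    (f : (Fin m → ZMod p) → ZMod (p ^ m - 1))
    (hf : PeriodicCostas p m (p ^ m - 1) f)
    (x : Fin m → ZMod p) (hx : ∀ i, x i ≠ 0) :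
    PeriodicCostas p m (p ^ m - 1) (fun a => f (fun i => x i * a i)) :=
  haveI : Fact p.Prime := ⟨hp⟩
  hf.comp_addMonoidHom (AddMonoidHom.mulLeft x) (Pi.mulLeft_injective hx)

/-- The multiplication permutation `G1` applied to an `(m+1)`-dimensional
periodic Costas array over `(ℤ_p)^m` generates a new `(m+1)`-dimensional
periodic Costas array. -/
theorem G1_general_periodicCostas
    (p m : ℕ) (hp : p.Prime) (hm : 1 ≤ m)
    (f : (Fin m → ZMod p) → ZMod (p ^ m - 1))
    (hf : PeriodicCostas p m (p ^ m - 1) f)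
    (x : Fin m → ZMod p) (hx : ∀ i, x i ≠ 0) :
    PeriodicCostas p m (p ^ m - 1) (fun a => f (fun i => x i * a i)) :=
  G1_general_periodicCostas_general p m hp f hf x hx
end

section
/- Let p be a prime, F a field with CharP F p, and α ∈ F an element not in the image of the canonical ring map ZMod p → F (equivalently, 1 and α are linearly independent over ZMod p). If x₁, x₂ ∈ ZMod p satisfy x₁ * x₂ ≠ 1, then the map from ZMod p × ZMod p to F sending (i, j) to ((i + x₂ * j : ZMod p) : F) * α + ((j + x₁ * i : ZMod p) : F) is injective; in particular, if ((i + x₂ * j) : F) * α + ((j + x₁ * i) : F) = ((i' + x₂ * j') : F) * α + ((j' + x₁ * i') : F) then (i, j) = (i', j'). -/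
/-! Since `1` and `α` are linearly independent over `ZMod p`, the map is injective as soon as the
shear `(i, j) ↦ (i + x₂ j, j + x₁ i)` is; that shear has determinant `1 - x₁ x₂ ≠ 0`. -/

section

variable {K F : Type*}

theorem shear_injective [CommRing K] [NoZeroDivisors K] {x₁ x₂ : K} (hx : x₁ * x₂ ≠ 1) :
    Function.Injective (fun ij : K × K => (ij.1 + x₂ * ij.2, ij.2 + x₁ * ij.1)) := by
  rintro ⟨i, j⟩ ⟨i', j'⟩ h
  obtain ⟨h₁, h₂⟩ := Prod.ext_iff.mp h
  dsimp only at h₁ h₂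
  have hj : (1 - x₁ * x₂) * (j - j') = 0 := by linear_combination h₂ - x₁ * h₁
  have hj' : j = j' :=
    sub_eq_zero.mp ((mul_eq_zero.mp hj).resolve_left (sub_ne_zero.mpr hx.symm))
  have hi' : i = i' := by linear_combination h₁ - x₂ * hj'
  rw [hi', hj']

variable [Field K] [Field F] (f : K →+* F) {α : F}

theorem eq_zero_of_map_mul_add_map_eq_zero (hα : ∀ c, f c ≠ α) {c d : K}
    (h : f c * α + f d = 0) : c = 0 ∧ d = 0 := by
  obtain rfl | hc := eq_or_ne c 0
  · simpa using h
  · refine absurd ?_ (hα (-d / c))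
    rw [map_div₀, map_neg, div_eq_iff (by simpa using hc)]
    linear_combination -h

theorem injective_map_mul_add_map (hα : ∀ c, f c ≠ α) :
    Function.Injective (fun cd : K × K => f cd.1 * α + f cd.2) := by
  rintro ⟨c, d⟩ ⟨c', d'⟩ h
  have hsub : f (c - c') * α + f (d - d') = 0 := by
    simp only [map_sub]
    linear_combination h
  obtain ⟨hc, hd⟩ := eq_zero_of_map_mul_add_map_eq_zero f hα hsub
  rw [sub_eq_zero.mp hc, sub_eq_zero.mp hd]

end

/-- Key injectivity step for the shear `G2`: if `α` lies outside the prime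
subfield of `F` and `x₁ * x₂ ≠ 1`, then the shear map
`(i, j) ↦ (i + x₂ j) α + (j + x₁ i)` from `ℤ_p × ℤ_p` into `F` is injective. -/
theorem shear_map_injective
    (p : ℕ) (hp : p.Prime)
    (F : Type*) [Field F] [CharP F p]
    (α : F) (hα : ∀ c : ZMod p, ZMod.castHom (dvd_refl p) F c ≠ α)
    (x₁ x₂ : ZMod p) (hx : x₁ * x₂ ≠ 1) :
    Function.Injective (fun ij : ZMod p × ZMod p =>
      (ZMod.castHom (dvd_refl p) F (ij.1 + x₂ * ij.2)) * α +
      (ZMod.castHom (dvd_refl p) F (ij.2 + x₁ * ij.1))) := by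
  have : Fact p.Prime := ⟨hp⟩
  exact (injective_map_mul_add_map _ hα).comp (shear_injective hx)
end
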